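/- The following relations among F-linear maps on V hold: K A*_L = q⁻² A*_L K, K B*_L = q² B*_L K, K A*_R = q⁻² A*_R K, K B*_R = q² B*_R K, K A_ℓ = q² A_ℓ K, K B_ℓ = q⁻² B_ℓ K, K A_r = q² A_r K, K B_r = q⁻² B_r K; A*_L A*_R = A*_R A*_L, B*_L B*_R = B*_R B*_L, A*_L B*_R = B*_R A*_L, B*_L A*_R = A*_R B*_L; A_ℓ A_r = A_r A_ℓ, B_ℓ B_r = B_r B_ℓ, A_ℓ B_r = B_r A_ℓ, B_ℓ A_r = A_r B_ℓ; A*_L B_r = B_r A*_L, B*_L A_r = A_r B*_L, A*_R B_ℓ = B_ℓ A*_R, B*_R A_ℓ = A_ℓ B*_R; A*_L B_ℓ = q⁻² B_ℓ A*_L, B*_L A_ℓ = q⁻² A_ℓ B*_L, A*_R B_r = q⁻² B_r A*_R, B*_R A_r = q⁻² A_r B*_R; A*_L A_ℓ − q² A_ℓ A*_L = I, A*_R A_r − q² A_r A*_R = I, B*_L B_ℓ − q² B_ℓ B*_L = I, B*_R B_r − q² B_r B*_R = I; A*_L A_r − A_r A*_L = K, B*_L B_r − B_r B*_L = K⁻¹,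 A*_R A_ℓ − A_ℓ A*_R = K, B*_R B_ℓ − B_ℓ B*_R = K⁻¹. -/

import Mathlib

noncomputable section
namespace SqPaper

/-- The two letters: `0 ↦ A`, `1 ↦ B`. -/
abbrev Ltr := Fin 2
def lA : Ltr := 0
def lB : Ltr := 1

/-- The pairing `⟨ , ⟩` on letters: `⟨A,A⟩=⟨B,B⟩=2`, `⟨A,B⟩=⟨B,A⟩=-2`. -/
def brk (x y : Ltr) : ℤ := if x = y then 2 else -2

variable (F : Type*) [Field F]

/-- The free algebra `V` on the two generators, realized as the monoid algebra of the
free monoid on two letters; the words form the standard basis. -/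
abbrev FA := MonoidAlgebra F (FreeMonoid Ltr)

/-- The standard basis vector attached to a word (list of letters). -/
def wd (l : List Ltr) : FA F := MonoidAlgebra.single (FreeMonoid.ofList l) 1

def Agen : FA F := wd F [lA]
def Bgen : FA F := wd F [lB]

/-- View an element of `V` as a finitely supported function on words. -/
def fsp (v : FA F) : FreeMonoid Ltr →₀ F := v.coeff

/-- The symmetric bilinear form on `V` for which the standard basis of words is orthonormal. -/
def form (u v : FA F) : F := (fsp F u).sum fun w c => c * (fsp F v) w

/-- Extend a function on words to an `F`-linear map on `V`. -/
def mkMap {M : Type*} [AddCommMonoid M] [Module F M] (f : List Ltr → M) :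
    FA F →ₗ[F] M :=
  Finsupp.lsum F (fun w => LinearMap.toSpanSingleton F M (f (FreeMonoid.toList w)))
    ∘ₗ (MonoidAlgebra.coeffLinearEquiv F).toLinearMap

/-- `[3]_q = (q³ - q⁻³)/(q - q⁻¹)`. -/
def tri (q : F) : F := (q ^ 3 - q⁻¹ ^ 3) / (q - q⁻¹)

/-- The q-shuffle product on words. -/
def shufW (q : F) : List Ltr → List Ltr → FA F
  | [], v => wd F v
  | u, [] => wd F u
  | a :: u, b :: v =>
      wd F [a] * shufW q u (b :: v) +
        (q ^ (((a :: u).map (fun x => brk x b)).sum)) • (wd F [b] * shufW q (a :: u) v)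
  termination_by u v => u.length + v.length

/-- The q-shuffle product `⋆` on `V`, as a bilinear map. -/
def qshuf (q : F) : FA F →ₗ[F] FA F →ₗ[F] FA F :=
  mkMap F fun u => mkMap F fun v => shufW F q u v

/-- Iterated `⋆`-product of the letters of a word. -/
def thetaW (q : F) : List Ltr → FA F
  | [] => 1
  | a :: t => qshuf F q (wd F [a]) (thetaW q t)

/-- `θ : V → V`, the algebra homomorphism from the free algebra to the q-shuffle algebra
with `θ(A) = A`, `θ(B) = B`. -/
def theta (q : F) : FA F →ₗ[F] FA F := mkMap F fun l => thetaW F q l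

/-- `A_L`, left multiplication by `A` in the free algebra. -/
def AL : FA F →ₗ[F] FA F := LinearMap.mulLeft F (Agen F)
def BL : FA F →ₗ[F] FA F := LinearMap.mulLeft F (Bgen F)
def AR : FA F →ₗ[F] FA F := LinearMap.mulRight F (Agen F)
def BR : FA F →ₗ[F] FA F := LinearMap.mulRight F (Bgen F)

/-- `X*_L` (for the letter `x`): deletes the letter `x` from the front of a word. -/
def delL (x : Ltr) : FA F →ₗ[F] FA F :=
  mkMap F fun l => if l.head? = some x then wd F l.tail else 0

/-- `X*_R` (for the letter `x`): deletes the letter `x` from the end of a word. -/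
def delR (x : Ltr) : FA F →ₗ[F] FA F :=
  mkMap F fun l => if l.getLast? = some x then wd F l.dropLast else 0

/-- `X_ℓ`: left q-shuffle multiplication by the letter `x`. -/
def shL (q : F) (x : Ltr) : FA F →ₗ[F] FA F := qshuf F q (wd F [x])

/-- `X_r`: right q-shuffle multiplication by the letter `x`. -/
def shR (q : F) (x : Ltr) : FA F →ₗ[F] FA F := (qshuf F q).flip (wd F [x])

/-- `X*_ℓ`: the weighted deletion map, deleting an occurrence of the letter `x`
with weight `q^{⟨v₁,x⟩+⋯+⟨v_{i-1},x⟩}`. -/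
def lowL (q : F) (x : Ltr) : FA F →ₗ[F] FA F :=
  mkMap F fun l =>
    ∑ i ∈ Finset.range l.length,
      if l[i]? = some x then
        (q ^ (((l.take i).map (fun y => brk y x)).sum)) • wd F (l.eraseIdx i)
      else 0

/-- `X*_r`: the weighted deletion map, deleting an occurrence of the letter `x`
with weight `q^{⟨vₙ,x⟩+⋯+⟨v_{i+1},x⟩}`. -/
def lowR (q : F) (x : Ltr) : FA F →ₗ[F] FA F :=
  mkMap F fun l =>
    ∑ i ∈ Finset.range l.length,
      if l[i]? = some x then
        (q ^ (((l.drop (i + 1)).map (fun y => brk y x)).sum)) • wd F (l.eraseIdx i)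
      else 0

/-- `K`, the algebra automorphism of the free algebra `V` with `K(A) = q²A`, `K(B) = q⁻²B`;
on a word `v = v₁⋯vₙ` it acts as `K(v) = v·q^{⟨v₁,A⟩+⋯+⟨vₙ,A⟩}`. -/
def Kop (q : F) : FA F →ₗ[F] FA F :=
  mkMap F fun l => (q ^ ((l.map (fun y => brk y lA)).sum)) • wd F l

/-- `K⁻¹`; on a word `v = v₁⋯vₙ` it acts as `K⁻¹(v) = v·q^{⟨v₁,B⟩+⋯+⟨vₙ,B⟩}`. -/
def Kinv (q : F) : FA F →ₗ[F] FA F :=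
  mkMap F fun l => (q ^ ((l.map (fun y => brk y lB)).sum)) • wd F l

/-- `T`, the automorphism of the free algebra swapping `A` and `B`. -/
def Top : FA F →ₗ[F] FA F :=
  mkMap F fun l => wd F (l.map (fun x => if x = lA then lB else lA))

/-- `Â = Q(A_L − K B_R)` and `B̂ = Q(B_L − K⁻¹ A_R)` where `Q = 1 - q²`. -/
def hatOp (q : F) (a : Ltr) : FA F →ₗ[F] FA F :=
  if a = lA then (1 - q ^ 2) • (AL F - Kop F q ∘ₗ BR F)
  else (1 - q ^ 2) • (BL F - Kinv F q ∘ₗ AR F)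

def phiW (q : F) : List Ltr → FA F
  | [] => 1
  | a :: t => hatOp F q a (phiW q t)

/-- The map `φ`: `φ(1) = 1` and `φ(v₁⋯vₙ) = v̂₁v̂₂⋯v̂ₙ(1)`. -/
def phi (q : F) : FA F →ₗ[F] FA F := mkMap F fun l => phiW F q l

/-- `ψ = K B_R A*_L + K⁻¹ A_R B*_L`. -/
def psi (q : F) : FA F →ₗ[F] FA F :=
  Kop F q ∘ₗ BR F ∘ₗ delL F lA + Kinv F q ∘ₗ AR F ∘ₗ delL F lB

/-- `V_n`, the span of the words of length `n`. -/
def Vn (n : ℕ) : Submodule F (FA F) :=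
  Submodule.span F { x | ∃ l : List Ltr, l.length = n ∧ x = wd F l }

/-- `J⁺ = A³B − [3]_q A²BA + [3]_q ABA² − BA³`. -/
def Jp (q : F) : FA F :=
  Agen F ^ 3 * Bgen F - tri F q • (Agen F ^ 2 * Bgen F * Agen F)
    + tri F q • (Agen F * Bgen F * Agen F ^ 2) - Bgen F * Agen F ^ 3

/-- `J⁻ = B³A − [3]_q B²AB + [3]_q BAB² − AB³`. -/
def Jm (q : F) : FA F :=
  Bgen F ^ 3 * Agen F - tri F q • (Bgen F ^ 2 * Agen F * Bgen F)
    + tri F q • (Bgen F * Agen F * Bgen F ^ 2) - Agen F * Bgen F ^ 3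

/-- `J`, the two-sided ideal of the free algebra generated by `J⁺` and `J⁻`
(realized as the `F`-span of the elements `a·J^±·b`). -/
def Jsub (q : F) : Submodule F (FA F) :=
  Submodule.span F { x | ∃ a b : FA F, x = a * Jp F q * b ∨ x = a * Jm F q * b }

/-- `U`, the subalgebra of the q-shuffle algebra `(V,⋆)` generated by `A` and `B`,
realized as the span of all `⋆`-products of the letters. -/
def Usub (q : F) : Submodule F (FA F) :=
  Submodule.span F (Set.range fun l : List Ltr => thetaW F q l)

/-- A `□_q`-module structure on an `F`-vector space `M`: four operators
`x₀, x₁, x₂, x₃` (indices mod 4) satisfying the q-Weyl and q-Serre relations. -/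
structure SqAct (q : F) (M : Type*) [AddCommGroup M] [Module F M] where
  x : ZMod 4 → Module.End F M
  weyl : ∀ i : ZMod 4,
    q • (x i * x (i + 1)) - q⁻¹ • (x (i + 1) * x i) = (q - q⁻¹) • (1 : Module.End F M)
  serre : ∀ i : ZMod 4,
    x i ^ 3 * x (i + 2) - tri F q • (x i ^ 2 * x (i + 2) * x i)
      + tri F q • (x i * x (i + 2) * x i ^ 2) - x (i + 2) * x i ^ 3 = 0

variable {F} {q : F} {M : Type*} [AddCommGroup M] [Module F M]

/-- A `□_q`-module `M` is generated by `ξ` if no proper submodule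
(subspace invariant under all the `xᵢ`) contains `ξ`. -/
def SqAct.Gen (S : SqAct F q M) (ξ : M) : Prop :=
  ∀ W : Submodule F M, (∀ i : ZMod 4, ∀ m ∈ W, S.x i m ∈ W) → ξ ∈ W → W = ⊤

/-- `W_n`: the span of the vectors `u₁u₂⋯uₙ·ξ` with each `uᵢ ∈ {x₀, x₂}`. -/
def SqAct.Wn (S : SqAct F q M) (ξ : M) (n : ℕ) : Submodule F M :=
  Submodule.span F
    { m | ∃ l : List (ZMod 4), l.length = n ∧ (∀ i ∈ l, i = 0 ∨ i = 2) ∧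
        m = l.foldr (fun i acc => S.x i acc) ξ }

end SqPaper

/-!
Every relation is checked on the basis of words. Let `K_y` (`Kx q y`) scale a word `v₁⋯vₙ` by
`q^{⟨v₁,y⟩+⋯+⟨vₙ,y⟩}`, so that `K = K_A` and `K⁻¹ = K_B`. Shuffling one letter into a word obeys
four recursions, each peeling a letter off one end of the word:

  `x ⋆ av = xav + q^{⟨x,a⟩} a(x ⋆ v)`,      `av ⋆ y = a(v ⋆ y) + y K_y(av)`,
  `y ⋆ vb = (y ⋆ v)b + K_y(vb) y`,          `vb ⋆ y = vby + q^{⟨b,y⟩} (v ⋆ y)b`.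

The deletion maps strip exactly such an end letter, so the mixed relations follow in one step.
`K_y` is multiplicative and every term of `u ⋆ v` has the letters of `uv`, which gives the
relations with `K`. Left and right shuffle multiplications commute by induction on the word,
using the first two recursions and `K_y(x ⋆ w) = q^{⟨x,y⟩} x ⋆ K_y w`.
-/

namespace SqPaper

open LinearMap (mulLeft mulRight)

variable {F : Type*} [Field F] {q : F}

section Words

lemma wd_append (u v : List Ltr) : wd F (u ++ v) = wd F u * wd F v := by
  simp only [wd, MonoidAlgebra.single_mul_single, one_mul]; rfl

lemma wd_cons (a : Ltr) (l : List Ltr) : wd F (a :: l) = wd F [a] * wd F l :=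
  wd_append [a] l

@[simp] lemma wd_nil : wd F ([] : List Ltr) = 1 := rfl

lemma mkMap_wd {M : Type*} [AddCommMonoid M] [Module F M] (f : List Ltr → M) (l : List Ltr) :
    mkMap F f (wd F l) = f l := by
  simp [mkMap, wd, MonoidAlgebra.coeffLinearEquiv_apply]

lemma hom_ext_wd {M : Type*} [AddCommMonoid M] [Module F M] {f g : FA F →ₗ[F] M}
    (h : ∀ l : List Ltr, f (wd F l) = g (wd F l)) : f = g :=
  MonoidAlgebra.lhom_ext' fun w => LinearMap.ext_ring (by simpa [wd] using h w.toList)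

end Words

section Pairing

lemma brk_comm (x y : Ltr) : brk x y = brk y x := by
  simp only [brk, eq_comm]

@[simp] lemma brk_self (x : Ltr) : brk x x = 2 := if_pos rfl

lemma brk_of_ne {x y : Ltr} (h : x ≠ y) : brk x y = -2 := if_neg h

def weight (y : Ltr) (l : List Ltr) : ℤ := (l.map fun z => brk z y).sum

@[simp] lemma weight_nil (y : Ltr) : weight y [] = 0 := rfl

lemma weight_append (y : Ltr) (u v : List Ltr) :
    weight y (u ++ v) = weight y u + weight y v := by
  simp [weight]

lemma weight_cons (y a : Ltr) (l : List Ltr) : weight y (a :: l) = brk a y + weight y l := by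
  simp [weight]

end Pairing

section FreeAlgebra

variable (q) in
def Kx (y : Ltr) : FA F →ₗ[F] FA F := mkMap F fun l => q ^ weight y l • wd F l

lemma Kop_eq_Kx : Kop F q = Kx q lA := rfl

lemma Kinv_eq_Kx : Kinv F q = Kx q lB := rfl

lemma Kx_wd (y : Ltr) (l : List Ltr) : Kx q y (wd F l) = q ^ weight y l • wd F l :=
  mkMap_wd _ _

@[simp] lemma Kx_one (y : Ltr) : Kx q y (1 : FA F) = 1 := by
  simp [← wd_nil, Kx_wd]

lemma Kx_mul (hq : q ≠ 0) (y : Ltr) (u v : FA F) : Kx q y (u * v) = Kx q y u * Kx q y v := by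
  have hwd (l : List Ltr) : Kx q y (wd F l * v) = Kx q y (wd F l) * Kx q y v := by
    have : Kx q y ∘ₗ mulLeft F (wd F l) = mulLeft F (Kx q y (wd F l)) ∘ₗ Kx q y :=
      hom_ext_wd fun m => by
        simp [Kx_wd, ← wd_append, weight_append, zpow_add₀ hq, smul_smul, mul_comm]
    exact LinearMap.congr_fun this v
  have : Kx q y ∘ₗ mulRight F v = mulRight F (Kx q y v) ∘ₗ Kx q y := hom_ext_wd hwd
  exact LinearMap.congr_fun this u

lemma Kx_letter_mul (hq : q ≠ 0) (y a : Ltr) (v : FA F) :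
    Kx q y (wd F [a] * v) = q ^ brk a y • (wd F [a] * Kx q y v) := by
  simp [Kx_mul hq, Kx_wd, weight]

lemma Kx_mul_letter (hq : q ≠ 0) (y b : Ltr) (v : FA F) :
    Kx q y (v * wd F [b]) = q ^ brk b y • (Kx q y v * wd F [b]) := by
  simp [Kx_mul hq, Kx_wd, weight]

lemma delL_wd (x : Ltr) (l : List Ltr) :
    delL F x (wd F l) = if l.head? = some x then wd F l.tail else 0 :=
  mkMap_wd _ _

lemma delR_wd (x : Ltr) (l : List Ltr) :
    delR F x (wd F l) = if l.getLast? = some x then wd F l.dropLast else 0 :=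
  mkMap_wd _ _

@[simp] lemma delL_one (x : Ltr) : delL F x 1 = 0 := by
  simp [← wd_nil, delL_wd]

@[simp] lemma delR_one (x : Ltr) : delR F x 1 = 0 := by
  simp [← wd_nil, delR_wd]

lemma delL_letter_mul (x a : Ltr) (v : FA F) :
    delL F x (wd F [a] * v) = if a = x then v else 0 := by
  have : delL F x ∘ₗ mulLeft F (wd F [a]) = if a = x then LinearMap.id else 0 :=
    hom_ext_wd fun l => by by_cases h : a = x <;> simp [h, ← wd_cons, delL_wd]
  simpa [apply_ite (fun f : FA F →ₗ[F] FA F => f v)] using LinearMap.congr_fun this v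

lemma delR_mul_letter (x b : Ltr) (v : FA F) :
    delR F x (v * wd F [b]) = if b = x then v else 0 := by
  have : delR F x ∘ₗ mulRight F (wd F [b]) = if b = x then LinearMap.id else 0 :=
    hom_ext_wd fun l => by by_cases h : b = x <;> simp [h, ← wd_append, delR_wd]
  simpa [apply_ite (fun f : FA F →ₗ[F] FA F => f v)] using LinearMap.congr_fun this v

end FreeAlgebra

section Shuffle

lemma shufW_nil_left (v : List Ltr) : shufW F q [] v = wd F v := by
  cases v <;> simp [shufW]

lemma shufW_nil_right (u : List Ltr) : shufW F q u [] = wd F u := by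
  cases u <;> simp [shufW]

lemma shufW_cons_cons (a b : Ltr) (u v : List Ltr) :
    shufW F q (a :: u) (b :: v) = wd F [a] * shufW F q u (b :: v) +
      q ^ weight b (a :: u) • (wd F [b] * shufW F q (a :: u) v) := by
  rw [shufW, weight]

lemma shL_wd (x : Ltr) (l : List Ltr) : shL F q x (wd F l) = shufW F q [x] l := by
  rw [shL, qshuf, mkMap_wd, mkMap_wd]

lemma shR_wd (x : Ltr) (l : List Ltr) : shR F q x (wd F l) = shufW F q l [x] := by
  rw [shR, LinearMap.flip_apply, qshuf, mkMap_wd, mkMap_wd]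

@[simp] lemma shL_one (x : Ltr) : shL F q x 1 = wd F [x] := by
  rw [← wd_nil, shL_wd, shufW_nil_right]

@[simp] lemma shR_one (x : Ltr) : shR F q x 1 = wd F [x] := by
  rw [← wd_nil, shR_wd, shufW_nil_left]

lemma Kx_shufW (hq : q ≠ 0) (y : Ltr) (u v : List Ltr) :
    Kx q y (shufW F q u v) = q ^ (weight y u + weight y v) • shufW F q u v := by
  induction u, v using shufW.induct with
  | case1 v => simp [shufW_nil_left, Kx_wd]
  | case2 u _ => simp [shufW_nil_right, Kx_wd]
  | case3 a u b v ih₁ ih₂ =>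
    rw [shufW_cons_cons, map_add, map_smul, Kx_letter_mul hq, Kx_letter_mul hq, ih₁, ih₂]
    simp only [weight_cons, zpow_add₀ hq, mul_smul_comm, smul_smul, smul_add]
    module

lemma shL_letter_mul (x a : Ltr) (v : FA F) :
    shL F q x (wd F [a] * v) =
      wd F [x] * (wd F [a] * v) + q ^ brk x a • (wd F [a] * shL F q x v) := by
  have : shL F q x ∘ₗ mulLeft F (wd F [a]) =
      mulLeft F (wd F [x] * wd F [a]) + q ^ brk x a • (mulLeft F (wd F [a]) ∘ₗ shL F q x) :=
    hom_ext_wd fun l => by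
      simp [← wd_append, shL_wd, shufW_cons_cons, shufW_nil_left, weight, brk_comm]
  simpa [mul_assoc] using LinearMap.congr_fun this v

lemma shR_letter_mul (y a : Ltr) (v : FA F) :
    shR F q y (wd F [a] * v) = wd F [a] * shR F q y v + wd F [y] * Kx q y (wd F [a] * v) := by
  have : shR F q y ∘ₗ mulLeft F (wd F [a]) =
      mulLeft F (wd F [a]) ∘ₗ shR F q y +
        mulLeft F (wd F [y]) ∘ₗ Kx q y ∘ₗ mulLeft F (wd F [a]) :=
    hom_ext_wd fun l => by simp [← wd_cons, shR_wd, shufW_cons_cons, shufW_nil_right, Kx_wd]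
  simpa using LinearMap.congr_fun this v

lemma shL_mul_letter (hq : q ≠ 0) (y b : Ltr) (v : FA F) :
    shL F q y (v * wd F [b]) = shL F q y v * wd F [b] + Kx q y (v * wd F [b]) * wd F [y] := by
  have : shL F q y ∘ₗ mulRight F (wd F [b]) =
      mulRight F (wd F [b]) ∘ₗ shL F q y +
        mulRight F (wd F [y]) ∘ₗ Kx q y ∘ₗ mulRight F (wd F [b]) := by
    refine hom_ext_wd fun l => ?_
    induction l with
    | nil =>
      simp [← wd_append, shL_wd, shufW_cons_cons, shufW_nil_left, shufW_nil_right, Kx_wd,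
        weight, brk_comm]
    | cons a t ih =>
      simp only [LinearMap.comp_apply, LinearMap.add_apply, LinearMap.mulRight_apply] at ih ⊢
      rw [wd_cons, mul_assoc, shL_letter_mul, shL_letter_mul, ih, Kx_letter_mul hq]
      simp only [mul_add, add_mul, smul_add, smul_mul_assoc, mul_assoc, brk_comm a y]
      abel
  simpa using LinearMap.congr_fun this v

lemma shR_mul_letter (hq : q ≠ 0) (y b : Ltr) (v : FA F) :
    shR F q y (v * wd F [b]) =
      v * wd F [b] * wd F [y] + q ^ brk b y • (shR F q y v * wd F [b]) := by
  have : shR F q y ∘ₗ mulRight F (wd F [b]) =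
      mulRight F (wd F [b] * wd F [y]) + q ^ brk b y • (mulRight F (wd F [b]) ∘ₗ shR F q y) := by
    refine hom_ext_wd fun l => ?_
    induction l with
    | nil => simp [← wd_append, shR_wd, shufW_cons_cons, shufW_nil_left, shufW_nil_right, weight]
    | cons a t ih =>
      simp only [LinearMap.comp_apply, LinearMap.add_apply, LinearMap.smul_apply,
        LinearMap.mulRight_apply] at ih ⊢
      rw [wd_cons, mul_assoc, shR_letter_mul, shR_letter_mul, ih, Kx_letter_mul hq,
        Kx_letter_mul hq, Kx_mul_letter hq]
      simp only [mul_add, add_mul, smul_add, mul_smul_comm, smul_mul_assoc, mul_assoc, smul_smul,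
        mul_comm]
      abel
  simpa [mul_assoc] using LinearMap.congr_fun this v

end Shuffle

section Relations

lemma Kx_comp_delL (hq : q ≠ 0) (y x : Ltr) :
    Kx q y ∘ₗ delL F x = q ^ (-brk x y) • (delL F x ∘ₗ Kx q y) := by
  refine hom_ext_wd fun l => ?_
  cases l with
  | nil => simp
  | cons a t =>
    rw [wd_cons]
    by_cases hax : a = x
    · subst hax
      simp [delL_letter_mul, Kx_letter_mul hq, smul_smul, zpow_ne_zero _ hq]
    · simp [delL_letter_mul, Kx_letter_mul hq, hax]

lemma Kx_comp_delR (hq : q ≠ 0) (y x : Ltr) :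
    Kx q y ∘ₗ delR F x = q ^ (-brk x y) • (delR F x ∘ₗ Kx q y) := by
  refine hom_ext_wd fun l => ?_
  rcases l.eq_nil_or_concat with rfl | ⟨t, b, rfl⟩
  · simp
  · rw [List.concat_eq_append, wd_append]
    by_cases hbx : b = x
    · subst hbx
      simp [delR_mul_letter, Kx_mul_letter hq, smul_smul, zpow_ne_zero _ hq]
    · simp [delR_mul_letter, Kx_mul_letter hq, hbx]

lemma Kx_comp_shL (hq : q ≠ 0) (y x : Ltr) :
    Kx q y ∘ₗ shL F q x = q ^ brk x y • (shL F q x ∘ₗ Kx q y) :=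
  hom_ext_wd fun l => by simp [shL_wd, Kx_shufW hq, Kx_wd, weight, smul_smul, zpow_add₀ hq]

lemma Kx_comp_shR (hq : q ≠ 0) (y x : Ltr) :
    Kx q y ∘ₗ shR F q x = q ^ brk x y • (shR F q x ∘ₗ Kx q y) :=
  hom_ext_wd fun l => by
    simp [shR_wd, Kx_shufW hq, Kx_wd, weight, smul_smul, zpow_add₀ hq, mul_comm]

lemma delL_comp_delR (x y : Ltr) : delL F x ∘ₗ delR F y = delR F y ∘ₗ delL F x := by
  refine hom_ext_wd fun l => ?_
  rcases l.eq_nil_or_concat with rfl | ⟨t, b, rfl⟩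
  · simp
  · cases t with
    | nil => simp [delL_wd, delR_wd, apply_ite (delL F x), apply_ite (delR F y)]
    | cons a s =>
      rw [List.concat_eq_append, List.cons_append, wd_cons, wd_append, LinearMap.comp_apply,
        LinearMap.comp_apply, delL_letter_mul, ← mul_assoc, delR_mul_letter]
      split_ifs <;> simp [delL_letter_mul, delR_mul_letter, *]

lemma shL_comp_shR (hq : q ≠ 0) (x y : Ltr) :
    shL F q x ∘ₗ shR F q y = shR F q y ∘ₗ shL F q x := by
  have hK (w : FA F) : shL F q x (wd F [y] * Kx q y w) =
      wd F [x] * (wd F [y] * Kx q y w) + wd F [y] * Kx q y (shL F q x w) := by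
    have := LinearMap.congr_fun (Kx_comp_shL hq y x) w
    simp only [LinearMap.comp_apply, LinearMap.smul_apply] at this
    rw [shL_letter_mul, ← mul_smul_comm, ← this]
  refine hom_ext_wd fun l => ?_
  simp only [LinearMap.comp_apply]
  induction l with
  | nil => simp [shL_wd, shR_wd]
  | cons a t ih =>
    rw [wd_cons, shR_letter_mul, map_add, shL_letter_mul, hK, ih, shL_letter_mul]
    simp only [map_add, map_smul, shR_letter_mul, mul_add, smul_add, mul_smul_comm]
    abel

lemma delL_comp_shL (x y : Ltr) :
    delL F x ∘ₗ shL F q y =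
      q ^ brk x y • (shL F q y ∘ₗ delL F x) + if x = y then LinearMap.id else 0 := by
  refine hom_ext_wd fun l => ?_
  cases l with
  | nil => by_cases h : x = y <;> simp [h, delL_wd, eq_comm]
  | cons a t =>
    rw [wd_cons]
    simp only [LinearMap.add_apply, LinearMap.comp_apply, LinearMap.smul_apply, shL_letter_mul,
      map_add, map_smul, delL_letter_mul]
    split_ifs <;> subst_vars <;> simp_all [brk_comm, add_comm]

lemma delL_comp_shR (x y : Ltr) :
    delL F x ∘ₗ shR F q y = shR F q y ∘ₗ delL F x + if x = y then Kx q x else 0 := by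
  refine hom_ext_wd fun l => ?_
  cases l with
  | nil => by_cases h : x = y <;> simp [h, delL_wd, eq_comm]
  | cons a t =>
    rw [wd_cons]
    simp only [LinearMap.add_apply, LinearMap.comp_apply, shR_letter_mul, map_add,
      delL_letter_mul]
    split_ifs <;> subst_vars <;> simp_all

lemma delR_comp_shL (hq : q ≠ 0) (x y : Ltr) :
    delR F x ∘ₗ shL F q y = shL F q y ∘ₗ delR F x + if x = y then Kx q x else 0 := by
  refine hom_ext_wd fun l => ?_
  rcases l.eq_nil_or_concat with rfl | ⟨t, b, rfl⟩
  · by_cases h : x = y <;> simp [h, delR_wd, eq_comm]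
  · rw [List.concat_eq_append, wd_append]
    simp only [LinearMap.add_apply, LinearMap.comp_apply, shL_mul_letter hq, map_add,
      delR_mul_letter]
    split_ifs <;> subst_vars <;> simp_all

lemma delR_comp_shR (hq : q ≠ 0) (x y : Ltr) :
    delR F x ∘ₗ shR F q y =
      q ^ brk x y • (shR F q y ∘ₗ delR F x) + if x = y then LinearMap.id else 0 := by
  refine hom_ext_wd fun l => ?_
  rcases l.eq_nil_or_concat with rfl | ⟨t, b, rfl⟩
  · by_cases h : x = y <;> simp [h, delR_wd, eq_comm]
  · rw [List.concat_eq_append, wd_append]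
    simp only [LinearMap.add_apply, LinearMap.comp_apply, LinearMap.smul_apply,
      shR_mul_letter hq, map_add, map_smul, delR_mul_letter]
    split_ifs <;> subst_vars <;> simp_all [brk_comm, add_comm]

end Relations

end SqPaper

open SqPaper in
theorem relations_maplist_one_general (F : Type*) [Field F] (q : F) (hq : q ≠ 0) :
    Kop F q ∘ₗ delL F lA = q⁻¹ ^ 2 • (delL F lA ∘ₗ Kop F q) ∧
    Kop F q ∘ₗ delL F lB = q ^ 2 • (delL F lB ∘ₗ Kop F q) ∧
    Kop F q ∘ₗ delR F lA = q⁻¹ ^ 2 • (delR F lA ∘ₗ Kop F q) ∧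
    Kop F q ∘ₗ delR F lB = q ^ 2 • (delR F lB ∘ₗ Kop F q) ∧
    Kop F q ∘ₗ shL F q lA = q ^ 2 • (shL F q lA ∘ₗ Kop F q) ∧
    Kop F q ∘ₗ shL F q lB = q⁻¹ ^ 2 • (shL F q lB ∘ₗ Kop F q) ∧
    Kop F q ∘ₗ shR F q lA = q ^ 2 • (shR F q lA ∘ₗ Kop F q) ∧
    Kop F q ∘ₗ shR F q lB = q⁻¹ ^ 2 • (shR F q lB ∘ₗ Kop F q) ∧
    delL F lA ∘ₗ delR F lA = delR F lA ∘ₗ delL F lA ∧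
    delL F lB ∘ₗ delR F lB = delR F lB ∘ₗ delL F lB ∧
    delL F lA ∘ₗ delR F lB = delR F lB ∘ₗ delL F lA ∧
    delL F lB ∘ₗ delR F lA = delR F lA ∘ₗ delL F lB ∧
    shL F q lA ∘ₗ shR F q lA = shR F q lA ∘ₗ shL F q lA ∧
    shL F q lB ∘ₗ shR F q lB = shR F q lB ∘ₗ shL F q lB ∧
    shL F q lA ∘ₗ shR F q lB = shR F q lB ∘ₗ shL F q lA ∧
    shL F q lB ∘ₗ shR F q lA = shR F q lA ∘ₗ shL F q lB ∧
    delL F lA ∘ₗ shR F q lB = shR F q lB ∘ₗ delL F lA ∧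
    delL F lB ∘ₗ shR F q lA = shR F q lA ∘ₗ delL F lB ∧
    delR F lA ∘ₗ shL F q lB = shL F q lB ∘ₗ delR F lA ∧
    delR F lB ∘ₗ shL F q lA = shL F q lA ∘ₗ delR F lB ∧
    delL F lA ∘ₗ shL F q lB = q⁻¹ ^ 2 • (shL F q lB ∘ₗ delL F lA) ∧
    delL F lB ∘ₗ shL F q lA = q⁻¹ ^ 2 • (shL F q lA ∘ₗ delL F lB) ∧
    delR F lA ∘ₗ shR F q lB = q⁻¹ ^ 2 • (shR F q lB ∘ₗ delR F lA) ∧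
    delR F lB ∘ₗ shR F q lA = q⁻¹ ^ 2 • (shR F q lA ∘ₗ delR F lB) ∧
    delL F lA ∘ₗ shL F q lA - q ^ 2 • (shL F q lA ∘ₗ delL F lA) = LinearMap.id ∧
    delR F lA ∘ₗ shR F q lA - q ^ 2 • (shR F q lA ∘ₗ delR F lA) = LinearMap.id ∧
    delL F lB ∘ₗ shL F q lB - q ^ 2 • (shL F q lB ∘ₗ delL F lB) = LinearMap.id ∧
    delR F lB ∘ₗ shR F q lB - q ^ 2 • (shR F q lB ∘ₗ delR F lB) = LinearMap.id ∧
    delL F lA ∘ₗ shR F q lA - shR F q lA ∘ₗ delL F lA = Kop F q ∧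
    delL F lB ∘ₗ shR F q lB - shR F q lB ∘ₗ delL F lB = Kinv F q ∧
    delR F lA ∘ₗ shL F q lA - shL F q lA ∘ₗ delR F lA = Kop F q ∧
    delR F lB ∘ₗ shL F q lB - shL F q lB ∘ₗ delR F lB = Kinv F q := by
  have hAB : lA ≠ lB := by decide
  rw [Kop_eq_Kx, Kinv_eq_Kx]
  simp [Kx_comp_delL hq, Kx_comp_delR hq, Kx_comp_shL hq, Kx_comp_shR hq, delL_comp_delR,
    shL_comp_shR hq, delL_comp_shL, delL_comp_shR, delR_comp_shL hq, delR_comp_shR hq,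
    brk_of_ne hAB, brk_of_ne hAB.symm, hAB, hAB.symm]

open SqPaper in
/-- the relations among `K, K⁻¹, A*_L, B*_L, A*_R, B*_R, A_ℓ, B_ℓ, A_r, B_r`. -/
theorem relations_maplist_one (F : Type*) [Field F] (q : F) (hq : q ≠ 0)
    (hq1 : ∀ k : ℕ, 0 < k → q ^ k ≠ 1) :
    Kop F q ∘ₗ delL F lA = q⁻¹ ^ 2 • (delL F lA ∘ₗ Kop F q) ∧
    Kop F q ∘ₗ delL F lB = q ^ 2 • (delL F lB ∘ₗ Kop F q) ∧
    Kop F q ∘ₗ delR F lA = q⁻¹ ^ 2 • (delR F lA ∘ₗ Kop F q) ∧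
    Kop F q ∘ₗ delR F lB = q ^ 2 • (delR F lB ∘ₗ Kop F q) ∧
    Kop F q ∘ₗ shL F q lA = q ^ 2 • (shL F q lA ∘ₗ Kop F q) ∧
    Kop F q ∘ₗ shL F q lB = q⁻¹ ^ 2 • (shL F q lB ∘ₗ Kop F q) ∧
    Kop F q ∘ₗ shR F q lA = q ^ 2 • (shR F q lA ∘ₗ Kop F q) ∧
    Kop F q ∘ₗ shR F q lB = q⁻¹ ^ 2 • (shR F q lB ∘ₗ Kop F q) ∧
    delL F lA ∘ₗ delR F lA = delR F lA ∘ₗ delL F lA ∧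
    delL F lB ∘ₗ delR F lB = delR F lB ∘ₗ delL F lB ∧
    delL F lA ∘ₗ delR F lB = delR F lB ∘ₗ delL F lA ∧
    delL F lB ∘ₗ delR F lA = delR F lA ∘ₗ delL F lB ∧
    shL F q lA ∘ₗ shR F q lA = shR F q lA ∘ₗ shL F q lA ∧
    shL F q lB ∘ₗ shR F q lB = shR F q lB ∘ₗ shL F q lB ∧
    shL F q lA ∘ₗ shR F q lB = shR F q lB ∘ₗ shL F q lA ∧
    shL F q lB ∘ₗ shR F q lA = shR F q lA ∘ₗ shL F q lB ∧
    delL F lA ∘ₗ shR F q lB = shR F q lB ∘ₗ delL F lA ∧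
    delL F lB ∘ₗ shR F q lA = shR F q lA ∘ₗ delL F lB ∧
    delR F lA ∘ₗ shL F q lB = shL F q lB ∘ₗ delR F lA ∧
    delR F lB ∘ₗ shL F q lA = shL F q lA ∘ₗ delR F lB ∧
    delL F lA ∘ₗ shL F q lB = q⁻¹ ^ 2 • (shL F q lB ∘ₗ delL F lA) ∧
    delL F lB ∘ₗ shL F q lA = q⁻¹ ^ 2 • (shL F q lA ∘ₗ delL F lB) ∧
    delR F lA ∘ₗ shR F q lB = q⁻¹ ^ 2 • (shR F q lB ∘ₗ delR F lA) ∧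
    delR F lB ∘ₗ shR F q lA = q⁻¹ ^ 2 • (shR F q lA ∘ₗ delR F lB) ∧
    delL F lA ∘ₗ shL F q lA - q ^ 2 • (shL F q lA ∘ₗ delL F lA) = LinearMap.id ∧
    delR F lA ∘ₗ shR F q lA - q ^ 2 • (shR F q lA ∘ₗ delR F lA) = LinearMap.id ∧
    delL F lB ∘ₗ shL F q lB - q ^ 2 • (shL F q lB ∘ₗ delL F lB) = LinearMap.id ∧
    delR F lB ∘ₗ shR F q lB - q ^ 2 • (shR F q lB ∘ₗ delR F lB) = LinearMap.id ∧
    delL F lA ∘ₗ shR F q lA - shR F q lA ∘ₗ delL F lA = Kop F q ∧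
    delL F lB ∘ₗ shR F q lB - shR F q lB ∘ₗ delL F lB = Kinv F q ∧
    delR F lA ∘ₗ shL F q lA - shL F q lA ∘ₗ delR F lA = Kop F q ∧
    delR F lB ∘ₗ shL F q lB - shL F q lB ∘ₗ delR F lB = Kinv F q :=
  relations_maplist_one_general F q hq
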